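/- Under the same setup, taking imaginary parts of inner products yields: (x - λ)·Im⟨f, R_{x+iy}(H_0) f⟩ = Im⟨R_{x-iy}(H_0) f, F*(u - T_{λ+iy}(H_1)u)⟩, where f = R_{λ+iy}(H_1)F*u. -/

import Mathlib

/-!
With `w = λ + iy` and `z = x + iy`, the equation `(H₁ - w) f = F* u` and `H₁ = H₀ + F* F` give
`F* (u - T_w(H₁) u) = (H₀ - z) f + (x - λ) f`. Pairing with `R_{z̄}(H₀) f` and using
`R_{z̄}(H₀)* = R_z(H₀)` turns the right-hand side into `‖f‖² + (x - λ) ⟪f, R_z(H₀) f⟫`,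
and `‖f‖²` has no imaginary part.
-/

open Complex ContinuousLinearMap
open scoped InnerProductSpace

/-- The resolvent `R_z(A) = (A - z)⁻¹` (as `Ring.inverse`, zero if not invertible). -/
noncomputable def res {H : Type*} [NormedAddCommGroup H] [NormedSpace ℂ H]
    (A : H →L[ℂ] H) (z : ℂ) : H →L[ℂ] H :=
  Ring.inverse (A - z • (1 : H →L[ℂ] H))

theorem IsSelfAdjoint.isUnit_sub_smul_one {A : Type*} [CStarAlgebra A] {a : A}
    (ha : IsSelfAdjoint a) {z : ℂ} (hz : z.im ≠ 0) : IsUnit (a - z • (1 : A)) := by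
  have hz' : z ∉ spectrum ℂ a := fun h => hz (ha.im_eq_zero_of_mem_spectrum h)
  simpa [neg_sub, Algebra.algebraMap_eq_smul_one] using (spectrum.notMem_iff.mp hz').neg

section Resolvent

variable {H : Type*} [NormedAddCommGroup H] [NormedSpace ℂ H] {A : H →L[ℂ] H} {z : ℂ}

theorem sub_smul_one_apply_res (hz : IsUnit (A - z • (1 : H →L[ℂ] H))) (v : H) :
    (A - z • (1 : H →L[ℂ] H)) (res A z v) = v :=
  congr($(Ring.mul_inverse_cancel _ hz) v)

theorem res_apply_sub_smul_one (hz : IsUnit (A - z • (1 : H →L[ℂ] H))) (v : H) :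
    res A z ((A - z • (1 : H →L[ℂ] H)) v) = v :=
  congr($(Ring.inverse_mul_cancel _ hz) v)

end Resolvent

section SelfAdjointResolvent

open scoped ComplexConjugate

variable {H : Type*} [NormedAddCommGroup H] [InnerProductSpace ℂ H] [CompleteSpace H]
  {A : H →L[ℂ] H} {z : ℂ}

theorem IsSelfAdjoint.adjoint_res (hA : IsSelfAdjoint A) (z : ℂ) :
    adjoint (res A z) = res A (conj z) := by
  rw [← star_eq_adjoint, res, res, ← Ring.inverse_star, star_sub, star_smul, hA.star_eq, star_one]
  rfl

theorem IsSelfAdjoint.inner_res_conj_left (hA : IsSelfAdjoint A) (z : ℂ) (f g : H) :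
    ⟪res A (conj z) f, g⟫_ℂ = ⟪f, res A z g⟫_ℂ := by
  rw [← hA.adjoint_res, adjoint_inner_left]

theorem IsSelfAdjoint.im_inner_res_conj_sub_smul_one (hA : IsSelfAdjoint A) (hz : z.im ≠ 0)
    (c : ℝ) (f : H) :
    (⟪res A (conj z) f, (A - z • (1 : H →L[ℂ] H)) f + (c : ℂ) • f⟫_ℂ).im
      = c * (⟪f, res A z f⟫_ℂ).im := by
  rw [inner_add_right, inner_smul_right, hA.inner_res_conj_left, hA.inner_res_conj_left,
    res_apply_sub_smul_one (hA.isUnit_sub_smul_one hz), inner_self_eq_norm_sq_to_K]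
  simp [← ofReal_pow, Complex.mul_im]

end SelfAdjointResolvent

theorem stmt4 {H K : Type*} [NormedAddCommGroup H] [InnerProductSpace ℂ H] [CompleteSpace H]
    [NormedAddCommGroup K] [InnerProductSpace ℂ K] [CompleteSpace K]
    (H0 H1 : H →L[ℂ] H) (F : H →L[ℂ] K) (hH0 : IsSelfAdjoint H0)
    (hH1 : H1 = H0 + (adjoint F).comp F)
    (l x y : ℝ) (hy : 0 < y) (u : K)
    (f : H) (hf : f = res H1 ((l : ℂ) + y * I) ((adjoint F) u)) :
    (x - l) * (⟪f, res H0 ((x : ℂ) + y * I) f⟫_ℂ).im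
      = (⟪res H0 ((x : ℂ) - y * I) f,
          (adjoint F) (u - (F ∘L res H1 ((l : ℂ) + y * I) ∘L adjoint F) u)⟫_ℂ).im := by
  set w : ℂ := (l : ℂ) + y * I
  set z : ℂ := (x : ℂ) + y * I
  have hH1sa : IsSelfAdjoint H1 := hH1 ▸ hH0.add (isPositive_adjoint_comp_self F).isSelfAdjoint
  have hfw : (H1 - w • (1 : H →L[ℂ] H)) f = adjoint F u :=
    hf ▸ sub_smul_one_apply_res (hH1sa.isUnit_sub_smul_one (by simp [w, hy.ne'])) _
  have hTu : (F ∘L res H1 w ∘L adjoint F) u = F f := by rw [hf]; rfl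
  have hperturb :
      adjoint F (u - F f) = (H0 - z • (1 : H →L[ℂ] H)) f + ((x - l : ℝ) : ℂ) • f := by
    rw [map_sub, ← hfw, hH1]
    simp only [sub_apply, add_apply, smul_apply, one_apply_eq_self, comp_apply, w, z]
    push_cast
    module
  have hconj : (x : ℂ) - y * I = (starRingEnd ℂ) z := by simp [z, Complex.ext_iff]
  rw [hTu, hperturb, hconj, hH0.im_inner_res_conj_sub_smul_one (by simp [z, hy.ne'])]
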